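/- For N ∈ ℕ and t ≥ 0 set σ_N(t) := ∑_{n ∈ ℤ³, |n| ≤ N} ( t/(2⟨n⟩²) − sin(2t⟨n⟩)/(4⟨n⟩³) ). Then: (a) each summand is nonnegative, and there exists an absolute constant C > 0 such that σ_N(t) ≤ C t N for all t ≥ 0 and all integers N ≥ 1; (b) there exists an absolute constant c > 0 such that σ_N(t) ≥ c t N whenever t > 0 and N ∈ ℕ satisfies N ≥ 2/t. In particular, for each fixed t > 0 one has σ_N(t) → ∞ as N → ∞. -/

import Mathlib

/-!
With `x = 2t⟨n⟩` the summand is `(x - sin x) / (4⟨n⟩³)`. Since `0 ≤ x - sin x ≤ 2x` it lies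
between `0` and `t / ⟨n⟩²`, and once `x ≥ 2` it is at least `t / (4⟨n⟩²)`.

Upper bound: `⟨n⟩⁻² ≤ ∏ᵢ (1 + nᵢ²)^(-1/3)`, so the sum over the cube `[-N, N]³` factorises into the
cube of `∑_{|k| ≤ N} (1 + k²)^(-1/3) = O(N^(1/3))`.

Lower bound: the roughly `(N/6)³` lattice points with all coordinates in `[N/3, N/2]` lie in the
ball and satisfy `N/2 ≤ ⟨n⟩ ≤ √2 N`, so for `tN ≥ 2` each of them contributes at least `t / (8N²)`.
-/

open scoped Classical

/-- Japanese bracket of a lattice point `n ∈ ℤ³`: `⟨n⟩ = (1 + |n|²)^{1/2}`. -/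
noncomputable def jb (n : Fin 3 → ℤ) : ℝ :=
  Real.sqrt (1 + ∑ i, ((n i : ℝ)) ^ 2)

/-- Euclidean norm of a lattice point `n ∈ ℤ³`. -/
noncomputable def enorm' (n : Fin 3 → ℤ) : ℝ :=
  Real.sqrt (∑ i, ((n i : ℝ)) ^ 2)

/-- The lattice points `n ∈ ℤ³` with `|n| ≤ N` (as a finite set). -/
noncomputable def latticeBall (N : ℕ) : Finset (Fin 3 → ℤ) :=
  (Finset.Icc (fun _ => -(N : ℤ)) (fun _ => (N : ℤ))).filter
    (fun n => enorm' n ≤ (N : ℝ))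

/-- The renormalization constant
`σ_N(t) = ∑_{|n| ≤ N} ( t/(2⟨n⟩²) − sin(2t⟨n⟩)/(4⟨n⟩³) )`. -/
noncomputable def sigmaN (N : ℕ) (t : ℝ) : ℝ :=
  ∑ n ∈ latticeBall N,
    (t / (2 * jb n ^ 2) - Real.sin (2 * t * jb n) / (4 * jb n ^ 3))

open Finset Real

/-- The variance `∫₀ᵗ (sin ((t - s) a) / a)² ds` of a single Fourier mode of frequency `a`. -/
noncomputable def modeVariance (t a : ℝ) : ℝ :=
  t / (2 * a ^ 2) - sin (2 * t * a) / (4 * a ^ 3)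

lemma modeVariance_eq {a : ℝ} (t : ℝ) (ha : a ≠ 0) :
    modeVariance t a = (2 * t * a - sin (2 * t * a)) / (4 * a ^ 3) := by
  unfold modeVariance
  field_simp
  ring

lemma modeVariance_nonneg {t a : ℝ} (ht : 0 ≤ t) (ha : 0 < a) : 0 ≤ modeVariance t a := by
  rw [modeVariance_eq t ha.ne']
  have := sin_le (by positivity : 0 ≤ 2 * t * a)
  exact div_nonneg (by linarith) (by positivity)

lemma modeVariance_le {t a : ℝ} (ht : 0 ≤ t) (ha : 0 < a) : modeVariance t a ≤ t / a ^ 2 := by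
  have hsin : -(2 * t * a) ≤ sin (2 * t * a) := by
    have := abs_sin_le_abs (x := 2 * t * a)
    rw [abs_of_nonneg (by positivity : 0 ≤ 2 * t * a)] at this
    exact (abs_le.1 this).1
  calc modeVariance t a = (2 * t * a - sin (2 * t * a)) / (4 * a ^ 3) := modeVariance_eq t ha.ne'
    _ ≤ (2 * (2 * t * a)) / (4 * a ^ 3) := by gcongr; linarith
    _ = t / a ^ 2 := by field_simp; ring

lemma div_le_modeVariance {t a : ℝ} (ha : 0 < a) (hta : 1 ≤ t * a) :
    t / (4 * a ^ 2) ≤ modeVariance t a := by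
  have hsin : sin (2 * t * a) ≤ t * a := (sin_le_one _).trans hta
  calc t / (4 * a ^ 2) = (2 * t * a - t * a) / (4 * a ^ 3) := by field_simp; ring
    _ ≤ (2 * t * a - sin (2 * t * a)) / (4 * a ^ 3) := by gcongr
    _ = modeVariance t a := (modeVariance_eq t ha.ne').symm

lemma sigmaN_eq_sum_modeVariance (N : ℕ) (t : ℝ) :
    sigmaN N t = ∑ n ∈ latticeBall N, modeVariance t (jb n) := rfl

lemma jb_sq (n : Fin 3 → ℤ) : jb n ^ 2 = 1 + ∑ i, (n i : ℝ) ^ 2 :=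
  sq_sqrt (by positivity)

lemma one_le_jb (n : Fin 3 → ℤ) : 1 ≤ jb n :=
  one_le_sqrt.2 (le_add_of_nonneg_right (by positivity))

lemma jb_pos (n : Fin 3 → ℤ) : 0 < jb n := one_pos.trans_le (one_le_jb n)

lemma inv_one_add_sum_le_prod_rpow {ι : Type*} [Fintype ι] [Nonempty ι] {y : ι → ℝ}
    (hy : ∀ i, 0 ≤ y i) :
    (1 + ∑ i, y i)⁻¹ ≤ ∏ i, (1 + y i) ^ (-(Fintype.card ι : ℝ)⁻¹) := by
  set S := ∑ i, y i
  set d := Fintype.card ι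
  have hS : 0 ≤ S := sum_nonneg fun i _ => hy i
  have hprod_pos : 0 < ∏ i, (1 + y i) := prod_pos fun i _ => by linarith [hy i]
  have hprod_le : ∏ i, (1 + y i) ≤ (1 + S) ^ d :=
    calc ∏ i, (1 + y i) ≤ ∏ _i : ι, (1 + S) :=
          prod_le_prod (fun i _ => by linarith [hy i])
            fun i _ => by linarith [single_le_sum (fun j _ => hy j) (mem_univ i)]
      _ = (1 + S) ^ d := by rw [prod_const, card_univ]
  have hd : (d : ℝ) ≠ 0 := by positivity
  calc (1 + S)⁻¹ = ((1 + S) ^ d) ^ (-(d : ℝ)⁻¹) := by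
        rw [← rpow_natCast, ← rpow_mul (by positivity), mul_neg, mul_inv_cancel₀ hd, rpow_neg_one]
    _ ≤ (∏ i, (1 + y i)) ^ (-(d : ℝ)⁻¹) :=
        rpow_le_rpow_of_nonpos hprod_pos hprod_le (by simp)
    _ = ∏ i, (1 + y i) ^ (-(d : ℝ)⁻¹) :=
        (finsetProd_rpow _ _ (fun i _ => by linarith [hy i]) _).symm

lemma rpow_neg_two_thirds_le_sub {x : ℝ} (hx : 0 ≤ x) :
    (x + 1) ^ (-(2 / 3) : ℝ) ≤ 3 * ((x + 1) ^ (1 / 3 : ℝ) - x ^ (1 / 3 : ℝ)) := by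
  set a := (x + 1) ^ (1 / 3 : ℝ)
  set b := x ^ (1 / 3 : ℝ)
  have hcube : ∀ {y : ℝ}, 0 ≤ y → (y ^ (1 / 3 : ℝ)) ^ 3 = y := fun hy => by
    rw [← rpow_natCast, ← rpow_mul hy]; norm_num
  have ha3 : a ^ 3 = x + 1 := hcube (by linarith)
  have hb3 : b ^ 3 = x := hcube hx
  have ha : 0 < a := rpow_pos_of_pos (by linarith) _
  have hb : 0 ≤ b := rpow_nonneg hx _
  have ha2 : (x + 1) ^ (-(2 / 3) : ℝ) = (a ^ 2)⁻¹ := by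
    rw [← rpow_natCast, ← rpow_mul (by linarith), ← rpow_neg (by linarith)]; norm_num
  -- `1 = a³ - b³ = (a - b)(a² + ab + b²) ≤ 3a²(a - b)`
  rw [ha2, inv_le_iff_one_le_mul₀ (by positivity)]
  nlinarith [sq_nonneg (a - b), sq_nonneg (a + b)]

lemma one_add_sq_rpow_le_abs_rpow {k : ℝ} (hk : k ≠ 0) :
    (1 + k ^ 2) ^ (-(1 / 3) : ℝ) ≤ |k| ^ (-(2 / 3) : ℝ) :=
  calc (1 + k ^ 2) ^ (-(1 / 3) : ℝ) ≤ (|k| ^ 2) ^ (-(1 / 3) : ℝ) := by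
        rw [sq_abs]
        exact rpow_le_rpow_of_nonpos (by positivity) (by linarith) (by norm_num)
    _ = |k| ^ (-(2 / 3) : ℝ) := by
        rw [← rpow_natCast, ← rpow_mul (abs_nonneg k)]; norm_num

lemma sum_Icc_one_add_sq_rpow_le (N : ℕ) :
    ∑ k ∈ Icc (-(N : ℤ)) N, (1 + (k : ℝ) ^ 2) ^ (-(1 / 3) : ℝ) ≤ 1 + 6 * (N : ℝ) ^ (1 / 3 : ℝ) := by
  induction N with
  | zero => simp
  | succ N ih =>
    have hIcc : Icc (-((N + 1 : ℕ) : ℤ)) ((N + 1 : ℕ) : ℤ)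
        = insert (-((N : ℤ) + 1)) (insert ((N : ℤ) + 1) (Icc (-(N : ℤ)) N)) := by
      ext k; simp only [mem_Icc, mem_insert]; omega
    have hend : ∀ k : ℤ, |(k : ℝ)| = N + 1 →
        (1 + (k : ℝ) ^ 2) ^ (-(1 / 3) : ℝ) ≤ ((N : ℝ) + 1) ^ (-(2 / 3) : ℝ) := fun k hk => by
      rw [← hk]
      exact one_add_sq_rpow_le_abs_rpow (abs_pos.1 (by rw [hk]; positivity))
    rw [hIcc, sum_insert (by simp only [mem_insert, mem_Icc]; omega),
      sum_insert (by simp only [mem_Icc]; omega)]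
    have h₁ := hend (-((N : ℤ) + 1)) (by push_cast; rw [abs_neg]; exact abs_of_pos (by positivity))
    have h₂ := hend ((N : ℤ) + 1) (by push_cast; exact abs_of_pos (by positivity))
    have h₃ := rpow_neg_two_thirds_le_sub (Nat.cast_nonneg N)
    push_cast at h₁ h₂ ⊢
    linarith

lemma sum_Icc_pi_prod {ι : Type*} [Fintype ι] [DecidableEq ι] (f : ℤ → ℝ) (a b : ℤ) :
    ∑ n ∈ Icc (fun _ : ι => a) (fun _ => b), ∏ i, f (n i) = (∑ k ∈ Icc a b, f k) ^ Fintype.card ι := by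
  rw [Pi.Icc_eq, ← prod_univ_sum, prod_const, card_univ]

lemma sum_latticeBall_inv_jb_sq_le {N : ℕ} (hN : 1 ≤ N) :
    ∑ n ∈ latticeBall N, (jb n ^ 2)⁻¹ ≤ 343 * N := by
  set w : ℤ → ℝ := fun k => (1 + (k : ℝ) ^ 2) ^ (-(1 / 3) : ℝ)
  have hw : ∀ n : Fin 3 → ℤ, (jb n ^ 2)⁻¹ ≤ ∏ i, w (n i) := fun n => by
    have := inv_one_add_sum_le_prod_rpow (y := fun i => (n i : ℝ) ^ 2) fun i => sq_nonneg _
    rw [jb_sq]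
    simpa [w, Fintype.card_fin] using this
  have hN' : (1 : ℝ) ≤ (N : ℝ) ^ (1 / 3 : ℝ) := one_le_rpow (by exact_mod_cast hN) (by norm_num)
  have hsum : 0 ≤ ∑ k ∈ Icc (-(N : ℤ)) N, w k := sum_nonneg fun k _ => by positivity
  calc ∑ n ∈ latticeBall N, (jb n ^ 2)⁻¹
      ≤ ∑ n ∈ Icc (fun _ => -(N : ℤ)) (fun _ => (N : ℤ)), (jb n ^ 2)⁻¹ :=
        sum_le_sum_of_subset_of_nonneg (filter_subset _ _) fun _ _ _ => by positivity
    _ ≤ ∑ n ∈ Icc (fun _ => -(N : ℤ)) (fun _ => (N : ℤ)), ∏ i, w (n i) := sum_le_sum fun n _ => hw n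
    _ = (∑ k ∈ Icc (-(N : ℤ)) N, w k) ^ 3 := sum_Icc_pi_prod w _ _
    _ ≤ (7 * (N : ℝ) ^ (1 / 3 : ℝ)) ^ 3 := by
        gcongr
        linarith [sum_Icc_one_add_sq_rpow_le N]
    _ = 343 * N := by
        rw [mul_pow, ← rpow_natCast ((N : ℝ) ^ (1 / 3 : ℝ)), ← rpow_mul (Nat.cast_nonneg N)]; norm_num

lemma sigmaN_le {t : ℝ} (ht : 0 ≤ t) {N : ℕ} (hN : 1 ≤ N) : sigmaN N t ≤ 343 * t * N :=
  calc sigmaN N t = ∑ n ∈ latticeBall N, modeVariance t (jb n) := sigmaN_eq_sum_modeVariance N t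
    _ ≤ ∑ n ∈ latticeBall N, t * (jb n ^ 2)⁻¹ :=
        sum_le_sum fun n _ => (modeVariance_le ht (jb_pos n)).trans_eq (div_eq_mul_inv _ _)
    _ = t * ∑ n ∈ latticeBall N, (jb n ^ 2)⁻¹ := (mul_sum _ _ _).symm
    _ ≤ t * (343 * N) := mul_le_mul_of_nonneg_left (sum_latticeBall_inv_jb_sq_le hN) ht
    _ = 343 * t * N := by ring

/-- Lattice points with all coordinates in `[(N + 1) / 3, N / 2]` (integer division): about
`(N / 6)³` points of the ball `|n| ≤ N` on which `⟨n⟩` is comparable to `N`. -/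
noncomputable def lowerBox (N : ℕ) : Finset (Fin 3 → ℤ) :=
  Icc (fun _ => ((N : ℤ) + 1) / 3) (fun _ => (N : ℤ) / 2)

lemma coord_bounds_of_mem_lowerBox {N : ℕ} {n : Fin 3 → ℤ} (hn : n ∈ lowerBox N) (i : Fin 3) :
    0 ≤ (n i : ℝ) ∧ (N : ℝ) ≤ 3 * n i + 1 ∧ 2 * (n i : ℝ) ≤ N := by
  have hlo := (mem_Icc.1 hn).1 i
  have hhi := (mem_Icc.1 hn).2 i
  dsimp only at hlo hhi
  refine ⟨by exact_mod_cast (by omega : 0 ≤ n i), by exact_mod_cast (by omega : (N : ℤ) ≤ 3 * n i + 1),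
    by exact_mod_cast (by omega : 2 * n i ≤ (N : ℤ))⟩

lemma lowerBox_subset_latticeBall (N : ℕ) : lowerBox N ⊆ latticeBall N := by
  intro n hn
  have hb := coord_bounds_of_mem_lowerBox hn
  have hlo := (mem_Icc.1 hn).1
  have hhi := (mem_Icc.1 hn).2
  refine mem_filter.2 ⟨mem_Icc.2 ⟨fun i => ?_, fun i => ?_⟩, ?_⟩
  · have := hlo i; dsimp only at this ⊢; omega
  · have := hhi i; dsimp only at this ⊢; omega
  · have hsum : ∑ i, (n i : ℝ) ^ 2 ≤ (N : ℝ) ^ 2 := by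
      rw [Fin.sum_univ_three]
      obtain ⟨h₀, -, h₀'⟩ := hb 0
      obtain ⟨h₁, -, h₁'⟩ := hb 1
      obtain ⟨h₂, -, h₂'⟩ := hb 2
      nlinarith
    exact sqrt_le_iff.2 ⟨Nat.cast_nonneg N, hsum⟩

lemma sq_le_four_mul_jb_sq_of_mem_lowerBox {N : ℕ} {n : Fin 3 → ℤ} (hn : n ∈ lowerBox N) :
    (N : ℝ) ^ 2 ≤ 4 * jb n ^ 2 := by
  rcases Nat.eq_zero_or_pos N with rfl | hN
  · rw [Nat.cast_zero, zero_pow two_ne_zero]; positivity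
  have hN' : (0 : ℝ) ≤ N - 1 := by
    rw [sub_nonneg]; exact_mod_cast hN
  rw [jb_sq, Fin.sum_univ_three]
  have hcoord : ∀ i, ((N : ℝ) - 1) ^ 2 ≤ (3 * n i) ^ 2 := fun i =>
    pow_le_pow_left₀ hN' (by linarith [(coord_bounds_of_mem_lowerBox hn i).2.1]) 2
  have h₀ := hcoord 0
  have h₁ := hcoord 1
  have h₂ := hcoord 2
  -- each `3 n i ≥ N - 1`, and `4 + 4 (N - 1)² / 3 - N² = (N - 4)² / 3`
  nlinarith [sq_nonneg ((N : ℝ) - 4)]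

lemma jb_sq_le_of_mem_lowerBox {N : ℕ} (hN : 1 ≤ N) {n : Fin 3 → ℤ} (hn : n ∈ lowerBox N) :
    jb n ^ 2 ≤ 2 * (N : ℝ) ^ 2 := by
  have hN' : (1 : ℝ) ≤ N := by exact_mod_cast hN
  rw [jb_sq, Fin.sum_univ_three]
  obtain ⟨h₀, -, h₀'⟩ := coord_bounds_of_mem_lowerBox hn 0
  obtain ⟨h₁, -, h₁'⟩ := coord_bounds_of_mem_lowerBox hn 1
  obtain ⟨h₂, -, h₂'⟩ := coord_bounds_of_mem_lowerBox hn 2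
  nlinarith

lemma card_lowerBox_ge (N : ℕ) : ((N : ℝ) / 6) ^ 3 ≤ #(lowerBox N) := by
  rw [lowerBox, Pi.card_Icc]
  simp only [Int.card_Icc, prod_const, card_univ, Fintype.card_fin, Nat.cast_pow]
  have hside : N ≤ 6 * ((N : ℤ) / 2 + 1 - ((N : ℤ) + 1) / 3).toNat := by omega
  gcongr
  rw [div_le_iff₀ (by norm_num), mul_comm]
  exact_mod_cast hside

lemma div_le_modeVariance_of_mem_lowerBox {t : ℝ} (ht : 0 < t) {N : ℕ} (htN : 2 ≤ t * N)
    {n : Fin 3 → ℤ} (hn : n ∈ lowerBox N) : t / (8 * (N : ℝ) ^ 2) ≤ modeVariance t (jb n) := by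
  have hN : 1 ≤ N := Nat.one_le_iff_ne_zero.2 <| by
    rintro rfl
    rw [Nat.cast_zero, mul_zero] at htN
    linarith
  have hjb := jb_pos n
  have hlow := sq_le_four_mul_jb_sq_of_mem_lowerBox hn
  have hN_le : (N : ℝ) ≤ 2 * jb n := by nlinarith
  calc t / (8 * (N : ℝ) ^ 2) ≤ t / (4 * jb n ^ 2) :=
        div_le_div_of_nonneg_left ht.le (by positivity)
          (by linarith [jb_sq_le_of_mem_lowerBox hN hn])
    _ ≤ modeVariance t (jb n) := div_le_modeVariance hjb (by nlinarith)

lemma sigmaN_ge {t : ℝ} (ht : 0 < t) {N : ℕ} (hN : 2 / t ≤ N) : 1728⁻¹ * t * N ≤ sigmaN N t := by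
  have htN : 2 ≤ t * N := by rwa [div_le_iff₀ ht, mul_comm] at hN
  have hN0 : (N : ℝ) ≠ 0 := by rintro h; rw [h] at htN; linarith
  calc 1728⁻¹ * t * N = ((N : ℝ) / 6) ^ 3 * (t / (8 * (N : ℝ) ^ 2)) := by field_simp; ring
    _ ≤ #(lowerBox N) * (t / (8 * (N : ℝ) ^ 2)) := by gcongr; exact card_lowerBox_ge N
    _ = ∑ _n ∈ lowerBox N, t / (8 * (N : ℝ) ^ 2) := by rw [sum_const, nsmul_eq_mul]
    _ ≤ ∑ n ∈ lowerBox N, modeVariance t (jb n) :=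
        sum_le_sum fun n hn => div_le_modeVariance_of_mem_lowerBox ht htN hn
    _ ≤ ∑ n ∈ latticeBall N, modeVariance t (jb n) :=
        sum_le_sum_of_subset_of_nonneg (lowerBox_subset_latticeBall N)
          fun n _ _ => modeVariance_nonneg ht.le (jb_pos n)
    _ = sigmaN N t := (sigmaN_eq_sum_modeVariance N t).symm

theorem renormalization_constant_growth :
    -- (a) each summand is nonnegative
    (∀ t : ℝ, 0 ≤ t → ∀ n : Fin 3 → ℤ,
        0 ≤ t / (2 * jb n ^ 2) - Real.sin (2 * t * jb n) / (4 * jb n ^ 3)) ∧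
    -- (a) upper bound σ_N(t) ≤ C t N
    (∃ C : ℝ, 0 < C ∧ ∀ t : ℝ, 0 ≤ t → ∀ N : ℕ, 1 ≤ N →
        sigmaN N t ≤ C * t * N) ∧
    -- (b) lower bound σ_N(t) ≥ c t N for N ≥ 2/t
    (∃ c : ℝ, 0 < c ∧ ∀ t : ℝ, 0 < t → ∀ N : ℕ, 2 / t ≤ (N : ℝ) →
        c * t * N ≤ sigmaN N t) ∧
    -- in particular, σ_N(t) → ∞ as N → ∞ for each fixed t > 0
    (∀ t : ℝ, 0 < t →
        Filter.Tendsto (fun N : ℕ => sigmaN N t) Filter.atTop Filter.atTop) := by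
  refine ⟨fun t ht n => modeVariance_nonneg ht (jb_pos n),
    ⟨343, by norm_num, fun t ht N hN => sigmaN_le ht hN⟩,
    ⟨1728⁻¹, by norm_num, fun t ht N hN => sigmaN_ge ht hN⟩, fun t ht => ?_⟩
  have hlinear : Filter.Tendsto (fun N : ℕ => 1728⁻¹ * t * (N : ℝ)) Filter.atTop Filter.atTop :=
    tendsto_natCast_atTop_atTop.const_mul_atTop (by positivity)
  refine Filter.tendsto_atTop_mono' _ ?_ hlinear
  filter_upwards [tendsto_natCast_atTop_atTop.eventually_ge_atTop (2 / t)] with N hN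
  exact sigmaN_ge ht hN
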